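/- arXiv:0803.2803 — 8 statements merged into one kernel-verified Lean document; each statement's English description precedes it below -/
import Mathlib

section
/- Let (F_n) be the Fibonacci numbers. For every integer n ≥ 1, F_n = Σ_{k∈ℤ} (−1)^k · C(n−1, ⌊(n−1−5k)/2⌋), where the sum runs over all integers k (only finitely many terms are nonzero). -/
/-- Binomial coefficient `C(m, j)` with integer lower index `j`,
equal to `0` when `j < 0` or `j > m`. -/
def ichoose (m : ℕ) (j : ℤ) : ℚ :=
  if j < 0 then 0 else (m.choose j.toNat : ℚ)

/-!
Write `S(m, t) = Σ_k (-1)^k C(m, ⌊(m + t - 5k)/2⌋)`, so that the right-hand side is `S(n - 1, 0)`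
for `n ≥ 1` and, since `0 - 1 = 0` in `ℕ`, `S(0, -1)` for `n = 0`.
Pascal's rule gives `S(m + 1, t) = S(m, t + 1) + S(m, t - 1)`, shifting `k` gives
`S(m, t + 5) = -S(m, t)`, and the symmetry `C(m, j) = C(m, m - j)` together with `k ↦ -k` gives
`S(m, t) = S(m, 1 - t)`. The last two force `S(m, 3) = -S(m, -2) = -S(m, 3) = 0`, and then the
pair `(S(m, -1), S(m, 0))` obeys the Fibonacci recursion, starting from `(0, 1)` at `m = 0`.
-/

lemma ichoose_eq_zero {m : ℕ} {j : ℤ} (h : j < 0 ∨ m < j) : ichoose m j = 0 := by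
  unfold ichoose
  split_ifs with hj
  · rfl
  · rw [Nat.choose_eq_zero_of_lt (by omega), Nat.cast_zero]

lemma ichoose_succ (m : ℕ) (j : ℤ) :
    ichoose (m + 1) j = ichoose m j + ichoose m (j - 1) := by
  rcases lt_trichotomy j 0 with h | rfl | h
  · simp [ichoose_eq_zero (Or.inl h), ichoose_eq_zero (Or.inl (show j - 1 < 0 by omega))]
  · simp [ichoose]
  · obtain ⟨i, rfl⟩ : ∃ i : ℕ, j = i + 1 := ⟨(j - 1).toNat, by omega⟩
    simp only [ichoose, add_sub_cancel_right]
    rw [if_neg (by omega), if_neg (by omega), if_neg (by omega),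
      show ((i : ℤ) + 1).toNat = i + 1 by omega, Int.toNat_natCast, Nat.choose_succ_succ',
      Nat.cast_add, add_comm]

lemma ichoose_symm (m : ℕ) (j : ℤ) : ichoose m j = ichoose m (m - j) := by
  by_cases hj : 0 ≤ j ∧ j ≤ m
  · obtain ⟨i, rfl⟩ : ∃ i : ℕ, j = i := ⟨j.toNat, by omega⟩
    simp only [ichoose]
    rw [if_neg (by omega), if_neg (by omega), show ((m : ℤ) - i).toNat = m - i by omega,
      Int.toNat_natCast, Nat.choose_symm (by omega)]
  · rw [ichoose_eq_zero (by omega), ichoose_eq_zero (by omega)]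

def andrewsTerm (m : ℕ) (t k : ℤ) : ℚ :=
  (-1) ^ k * ichoose m ((m + t - 5 * k) / 2)

noncomputable def andrewsSum (m : ℕ) (t : ℤ) : ℚ :=
  ∑ᶠ k, andrewsTerm m t k

lemma andrewsTerm_eq_zero {m : ℕ} {t k : ℤ}
    (h : (m + t - 5 * k) / 2 < 0 ∨ m < (m + t - 5 * k) / 2) : andrewsTerm m t k = 0 := by
  rw [andrewsTerm, ichoose_eq_zero h, mul_zero]

lemma finite_support_andrewsTerm (m : ℕ) (t : ℤ) : (Function.support (andrewsTerm m t)).Finite :=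
  (Set.finite_Icc ((t - m - 5) / 5) ((m + t) / 5 + 1)).subset fun k hk => by
    by_contra hk'
    exact hk (andrewsTerm_eq_zero (by simp only [Set.mem_Icc] at hk'; omega))

lemma andrewsSum_succ (m : ℕ) (t : ℤ) :
    andrewsSum (m + 1) t = andrewsSum m (t + 1) + andrewsSum m (t - 1) := by
  rw [andrewsSum, andrewsSum, andrewsSum,
    ← finsum_add_distrib (finite_support_andrewsTerm m _) (finite_support_andrewsTerm m _)]
  refine finsum_congr fun k => ?_
  have h₁ : ((m + 1 : ℕ) + t - 5 * k) / 2 = (m + (t + 1) - 5 * k) / 2 := by push_cast; ring_nf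
  have h₂ : (m + (t + 1) - 5 * k) / 2 - 1 = (m + (t - 1) - 5 * k) / 2 := by omega
  rw [andrewsTerm, andrewsTerm, andrewsTerm, h₁, ichoose_succ, h₂, mul_add]

lemma andrewsSum_add_five (m : ℕ) (t : ℤ) : andrewsSum m (t + 5) = -andrewsSum m t := by
  rw [andrewsSum, ← finsum_comp_equiv (Equiv.addRight 1), andrewsSum, ← finsum_neg_distrib]
  refine finsum_congr fun k => ?_
  have h : (m : ℤ) + (t + 5) - 5 * (k + 1) = m + t - 5 * k := by ring
  rw [Equiv.coe_addRight, andrewsTerm, andrewsTerm, h, zpow_add_one₀ (by norm_num)]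
  ring

lemma andrewsSum_one_sub (m : ℕ) (t : ℤ) : andrewsSum m (1 - t) = andrewsSum m t := by
  rw [andrewsSum, ← finsum_comp_equiv (Equiv.neg ℤ), andrewsSum]
  refine finsum_congr fun k => ?_
  have h : ((m : ℤ) + (1 - t) - 5 * -k) / 2 = m - (m + t - 5 * k) / 2 := by omega
  rw [Equiv.neg_apply, andrewsTerm, andrewsTerm, h, ← ichoose_symm, zpow_neg, ← inv_zpow,
    inv_neg, inv_one]

lemma andrewsSum_three (m : ℕ) : andrewsSum m 3 = 0 := by
  have h := andrewsSum_add_five m (-2)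
  rw [show (-2 : ℤ) = 1 - 3 by norm_num, andrewsSum_one_sub] at h
  norm_num at h
  linarith

lemma andrewsSum_zero_neg_one : andrewsSum 0 (-1) = 0 :=
  finsum_eq_zero_of_forall_eq_zero fun k => andrewsTerm_eq_zero (by omega)

lemma andrewsSum_zero_zero : andrewsSum 0 0 = 1 := by
  rw [andrewsSum, finsum_eq_single _ 0 fun k hk => andrewsTerm_eq_zero (by omega)]
  simp [andrewsTerm, ichoose]

lemma andrewsSum_eq_fib (m : ℕ) :
    andrewsSum m (-1) = Nat.fib m ∧ andrewsSum m 0 = Nat.fib (m + 1) := by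
  induction m with
  | zero => simp [andrewsSum_zero_neg_one, andrewsSum_zero_zero]
  | succ m ih =>
    have h_one : andrewsSum m 1 = andrewsSum m 0 := by simpa using andrewsSum_one_sub m 0
    have h_neg_two : andrewsSum m (-2) = 0 := by
      simpa [andrewsSum_three] using andrewsSum_one_sub m 3
    norm_num [andrewsSum_succ, h_one, h_neg_two, ih.1, ih.2, Nat.fib_add_two]
    ring

lemma floor_sub_five_mul_div_two (a k : ℤ) : ⌊((a : ℚ) - 5 * k) / 2⌋ = (a - 5 * k) / 2 := by
  exact_mod_cast Rat.floor_intCast_div_natCast (a - 5 * k) 2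

theorem fib_eq_finsum_choose_floor_general (n : ℕ) :
    (Nat.fib n : ℚ) =
      ∑ᶠ k : ℤ, (-1 : ℚ) ^ k * ichoose (n - 1) ⌊((n : ℚ) - 1 - 5 * (k : ℚ)) / 2⌋ := by
  cases n with
  | zero =>
    rw [← (andrewsSum_eq_fib 0).1]
    refine finsum_congr fun k => ?_
    rw [andrewsTerm, ← floor_sub_five_mul_div_two]
    push_cast
    ring_nf
  | succ m =>
    rw [← (andrewsSum_eq_fib m).2]
    refine finsum_congr fun k => ?_
    rw [andrewsTerm, ← floor_sub_five_mul_div_two]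
    push_cast
    ring_nf

/-- Andrews' identity: for `n ≥ 1`,
`F_n = Σ_{k∈ℤ} (−1)^k · C(n−1, ⌊(n−1−5k)/2⌋)`. -/
theorem fib_eq_finsum_choose_floor (n : ℕ) (hn : 1 ≤ n) :
    (Nat.fib n : ℚ) =
      ∑ᶠ k : ℤ, (-1 : ℚ) ^ k * ichoose (n - 1) ⌊((n : ℚ) - 1 - 5 * (k : ℚ)) / 2⌋ :=
  fib_eq_finsum_choose_floor_general n
end

section
/- Let (F_n) be the Fibonacci numbers. For every integer n ≥ 0, F_{2n+2} = Σ_{j∈ℤ} [ C(2n+2, n−5j) − C(2n+2, n−5j−1) ], where the sum runs over all integers j (only finitely many terms are nonzero). -/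
open Function

def residueChooseSum (q m : ℕ) (r : ZMod q) : ℕ :=
  ∑ k ∈ Finset.range (m + 1) with ((k : ℕ) : ZMod q) = r, m.choose k

section residueChooseSum

variable {q : ℕ}

theorem residueChooseSum_zero (r : ZMod q) :
    residueChooseSum q 0 r = if r = 0 then 1 else 0 := by
  simp [residueChooseSum, Finset.sum_filter, eq_comm]

theorem residueChooseSum_succ (m : ℕ) (r : ZMod q) :
    residueChooseSum q (m + 1) r = residueChooseSum q m r + residueChooseSum q m (r - 1) := by
  simp only [residueChooseSum, Finset.sum_filter]
  rw [Finset.sum_range_succ', Finset.sum_range_succ]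
  conv_rhs => rw [Finset.sum_range_succ']
  simp only [Nat.choose_succ_succ', ite_add_zero, Finset.sum_add_distrib, eq_sub_iff_add_eq,
    Nat.cast_succ]
  rw [Finset.sum_range_succ _ m]
  simp only [Nat.choose_self, Nat.choose_succ_self, Nat.choose_zero_right, Nat.cast_zero, ite_self,
    add_zero]
  ring

theorem residueChooseSum_symm (m : ℕ) (r : ZMod q) :
    residueChooseSum q m r = residueChooseSum q m (m - r) := by
  simp only [residueChooseSum, Finset.sum_filter]
  rw [← Finset.sum_range_reflect]
  refine Finset.sum_congr rfl fun k hk => ?_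
  have hkm : k ≤ m := Nat.lt_succ_iff.mp (Finset.mem_range.mp hk)
  simp only [add_tsub_cancel_right, Nat.choose_symm hkm, Nat.cast_sub hkm, sub_eq_iff_eq_add,
    eq_sub_iff_add_eq, eq_comm (a := (m : ZMod q)), add_comm]

theorem residueChooseSum_two_mul_neg (n : ℕ) (t : ZMod q) :
    residueChooseSum q (2 * n) (n + -t) = residueChooseSum q (2 * n) (n + t) := by
  rw [residueChooseSum_symm]
  congr 1
  push_cast
  ring

theorem residueChooseSum_two_mul_succ (n : ℕ) (t : ZMod q) :
    residueChooseSum q (2 * (n + 1)) ((n + 1 : ℕ) + t) =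
      residueChooseSum q (2 * n) (n + (t + 1)) + 2 * residueChooseSum q (2 * n) (n + t) +
        residueChooseSum q (2 * n) (n + (t - 1)) := by
  rw [show 2 * (n + 1) = 2 * n + 1 + 1 by ring, residueChooseSum_succ, residueChooseSum_succ,
    residueChooseSum_succ]
  push_cast
  ring_nf

end residueChooseSum

theorem residueChooseSum_five_two_mul_eq_add_fib (n : ℕ) :
    residueChooseSum 5 (2 * n) (n + 1) = residueChooseSum 5 (2 * n) (n + 2) + Nat.fib (2 * n) ∧
      residueChooseSum 5 (2 * n) n = residueChooseSum 5 (2 * n) (n + 2) + Nat.fib (2 * n + 1) := by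
  induction n with
  | zero =>
    simp only [Nat.mul_zero, Nat.cast_zero, zero_add, residueChooseSum_zero, Nat.fib_zero,
      Nat.fib_one]
    decide
  | succ n ih =>
    obtain ⟨h1, h0⟩ := ih
    have s1 := residueChooseSum_two_mul_succ (q := 5) n 1
    have s2 := residueChooseSum_two_mul_succ (q := 5) n 2
    have s0 := residueChooseSum_two_mul_succ (q := 5) n 0
    -- the modulus enters only here: the five residues around `n` are `n`, `n ± 1`, `n ± 2`
    have h3 : (2 + 1 : ZMod 5) = -2 := by decide
    rw [h3, residueChooseSum_two_mul_neg] at s2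
    rw [zero_sub, residueChooseSum_two_mul_neg] at s0
    norm_num at s1 s2 s0
    have fib_even : Nat.fib (2 * (n + 1)) = Nat.fib (2 * n) + Nat.fib (2 * n + 1) :=
      Nat.fib_add_two
    have fib_odd : Nat.fib (2 * (n + 1) + 1) = Nat.fib (2 * n + 1) + Nat.fib (2 * (n + 1)) :=
      Nat.fib_add_two
    push_cast
    constructor <;> omega

theorem residueChooseSum_five_eq_add_fib (n : ℕ) :
    residueChooseSum 5 (2 * n + 2) n =
      residueChooseSum 5 (2 * n + 2) (n - 1) + Nat.fib (2 * n + 2) := by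
  obtain ⟨h, -⟩ := residueChooseSum_five_two_mul_eq_add_fib (n + 1)
  rw [← residueChooseSum_two_mul_neg, ← residueChooseSum_two_mul_neg _ 2] at h
  convert h using 3 <;> push_cast <;> ring

theorem ichoose_eq_sum_range (m : ℕ) (j : ℤ) :
    ichoose m j =
      ∑ k ∈ Finset.range (m + 1), if (k : ℤ) = j then (m.choose k : ℚ) else 0 := by
  rw [ichoose]
  split_ifs with hj
  · exact (Finset.sum_eq_zero fun k _ => if_neg (by omega)).symm
  · lift j to ℕ using not_lt.mp hj
    simp [Finset.sum_ite_eq', Nat.choose_eq_zero_iff]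

section sub_mul

variable {q : ℕ}

theorem injective_sub_natCast_mul (hq : q ≠ 0) (c : ℤ) : Injective fun j : ℤ => c - q * j :=
  fun a b h => by simpa [hq] using h

theorem finsum_ite_eq_sub_natCast_mul {M : Type*} [AddCommMonoid M] (hq : q ≠ 0) (a c : ℤ)
    (x : M) :
    ∑ᶠ j : ℤ, (if a = c - q * j then x else 0) = if (a : ZMod q) = c then x else 0 := by
  split_ifs with h
  · obtain ⟨t, ht⟩ := (ZMod.intCast_eq_intCast_iff_dvd_sub _ _ _).mp h
    rw [finsum_eq_single _ t fun j hj => if_neg ?_, if_pos (by linarith)]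
    exact fun _ => hj (injective_sub_natCast_mul hq c (by linarith))
  · refine finsum_eq_zero_of_forall_eq_zero fun j => if_neg ?_
    rintro rfl
    simp at h

theorem hasFiniteSupport_ichoose_sub_natCast_mul (hq : q ≠ 0) (m : ℕ) (c : ℤ) :
    HasFiniteSupport fun j : ℤ => ichoose m (c - q * j) := by
  refine HasFiniteSupport.fun_comp_of_injective (injective_sub_natCast_mul hq c)
    ((Set.finite_Icc (0 : ℤ) m).subset fun j hj => ?_)
  contrapose! hj
  rw [Set.mem_Icc, not_and_or, not_le, not_le] at hj
  rw [notMem_support, ichoose]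
  split_ifs
  · rfl
  · rw [Nat.choose_eq_zero_of_lt (by omega), Nat.cast_zero]

theorem finsum_ichoose_sub_natCast_mul (hq : q ≠ 0) (m : ℕ) (c : ℤ) :
    ∑ᶠ j : ℤ, ichoose m (c - q * j) = residueChooseSum q m c := by
  simp only [ichoose_eq_sum_range]
  rw [finsum_sum_comm]
  · simp only [residueChooseSum, Finset.sum_filter, Nat.cast_sum, Nat.cast_ite, Nat.cast_zero]
    refine Finset.sum_congr rfl fun k _ => ?_
    rw [finsum_ite_eq_sub_natCast_mul hq]
    simp
  · intro k _
    refine HasFiniteSupport.fun_comp_of_injective (injective_sub_natCast_mul hq c)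
      (f := fun i : ℤ => if (k : ℤ) = i then (m.choose k : ℚ) else 0)
      ((Set.finite_singleton (k : ℤ)).subset fun i hi => ?_)
    by_contra hik
    rw [mem_support, if_neg (Ne.symm hik)] at hi
    exact hi rfl

end sub_mul

/-- `F_{2n+2} = Σ_{j∈ℤ} [ C(2n+2, n−5j) − C(2n+2, n−5j−1) ]`. -/
theorem fib_even_eq_finsum_choose (n : ℕ) :
    (Nat.fib (2 * n + 2) : ℚ) =
      ∑ᶠ j : ℤ, (ichoose (2 * n + 2) ((n : ℤ) - 5 * j)
        - ichoose (2 * n + 2) ((n : ℤ) - 5 * j - 1)) := by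
  have h5 : (5 : ℕ) ≠ 0 := by norm_num
  have hsum (c : ℤ) :
      ∑ᶠ j : ℤ, ichoose (2 * n + 2) (c - 5 * j) = residueChooseSum 5 (2 * n + 2) c := by
    simpa using finsum_ichoose_sub_natCast_mul h5 (2 * n + 2) c
  have hfin (c : ℤ) : HasFiniteSupport fun j : ℤ => ichoose (2 * n + 2) (c - 5 * j) := by
    simpa using hasFiniteSupport_ichoose_sub_natCast_mul h5 (2 * n + 2) c
  simp_rw [sub_right_comm _ _ (1 : ℤ)]
  rw [finsum_sub_distrib (hfin _) (hfin _), hsum, hsum]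
  push_cast
  rw [residueChooseSum_five_eq_add_fib]
  push_cast
  ring
end

section
/- Let (F_n) be the Fibonacci numbers. For every integer n ≥ 0, F_{2n+2} = Σ_{j∈ℤ} [ C(2n+1, n−5j) − C(2n+1, n−5j−2) ], where the sum runs over all integers j (only finitely many terms are nonzero). -/
namespace ichoose

lemma of_neg {m : ℕ} {j : ℤ} (hj : j < 0) : ichoose m j = 0 :=
  if_pos hj

lemma of_lt {m : ℕ} {j : ℤ} (hj : (m : ℤ) < j) : ichoose m j = 0 := by
  rw [ichoose, if_neg (by omega), Nat.choose_eq_zero_of_lt (by omega), Nat.cast_zero]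

lemma natCast (m k : ℕ) : ichoose m k = m.choose k := by
  simp [ichoose]

lemma succ (m : ℕ) (j : ℤ) : ichoose (m + 1) j = ichoose m j + ichoose m (j - 1) := by
  rcases lt_or_ge j 0 with hj | hj
  · rw [of_neg hj, of_neg hj, of_neg (by omega), add_zero]
  lift j to ℕ using hj
  cases j with
  | zero => simp [ichoose]
  | succ k =>
    rw [show ((k + 1 : ℕ) : ℤ) - 1 = k by omega, natCast, natCast, natCast,
      Nat.choose_succ_succ', Nat.cast_add, add_comm]

lemma symm (m : ℕ) (j : ℤ) : ichoose m (m - j) = ichoose m j := by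
  rcases lt_or_ge j 0 with hj | hj
  · rw [of_lt (by omega), of_neg hj]
  rcases lt_or_ge (m : ℤ) j with hjm | hjm
  · rw [of_neg (by omega), of_lt hjm]
  lift j to ℕ using hj
  rw [← Nat.cast_sub (by exact_mod_cast hjm), natCast, natCast,
    Nat.choose_symm (by exact_mod_cast hjm)]

lemma hasFiniteSupport (m : ℕ) : (ichoose m).HasFiniteSupport :=
  (Set.finite_Icc (0 : ℤ) m).subset fun j hj => by
    by_contra h
    rw [Set.mem_Icc, not_and_or, not_le, not_le] at h
    exact hj (h.elim of_neg of_lt)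

end ichoose

/-- The sum of `C(m, k)` over all integers `k ≡ t (mod d)`. -/
noncomputable def chooseResidueSum (d : ℤ) (m : ℕ) (t : ℤ) : ℚ :=
  ∑ᶠ j : ℤ, ichoose m (t - d * j)

namespace chooseResidueSum

lemma hasFiniteSupport {d : ℤ} (hd : d ≠ 0) (m : ℕ) (t : ℤ) :
    (fun j : ℤ => ichoose m (t - d * j)).HasFiniteSupport :=
  (ichoose.hasFiniteSupport m).fun_comp_of_injective fun i j hij => by
    simpa [hd] using hij

lemma succ {d : ℤ} (hd : d ≠ 0) (m : ℕ) (t : ℤ) :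
    chooseResidueSum d (m + 1) t = chooseResidueSum d m t + chooseResidueSum d m (t - 1) := by
  have hshift : ∀ j, t - d * j - 1 = t - 1 - d * j := fun j => by ring
  simp only [chooseResidueSum, ichoose.succ, hshift]
  exact finsum_add_distrib (hasFiniteSupport hd m t) (hasFiniteSupport hd m (t - 1))

lemma add_two {d : ℤ} (hd : d ≠ 0) (m : ℕ) (t : ℤ) :
    chooseResidueSum d (m + 2) t = chooseResidueSum d m t + 2 * chooseResidueSum d m (t - 1)
      + chooseResidueSum d m (t - 2) := by
  rw [succ hd, succ hd, succ hd, show t - 1 - 1 = t - 2 by ring]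
  ring

lemma add_modulus (d : ℤ) (m : ℕ) (t : ℤ) :
    chooseResidueSum d m (t + d) = chooseResidueSum d m t := by
  simp only [chooseResidueSum]
  rw [← finsum_comp_equiv (Equiv.addRight 1)]
  congr 1 with j
  rw [Equiv.coe_addRight]
  ring_nf

lemma eq_of_add_eq (d : ℤ) (m : ℕ) {s t : ℤ} (hst : s + t = m) :
    chooseResidueSum d m s = chooseResidueSum d m t := by
  simp only [chooseResidueSum]
  rw [← finsum_comp_equiv (Equiv.neg ℤ)]
  congr 1 with j
  rw [← ichoose.symm m (t - d * j), Equiv.neg_apply]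
  congr 1
  linarith

lemma zero {d : ℤ} (hd : d ≠ 0) (t : ℤ) :
    chooseResidueSum d 0 t = if d ∣ t then 1 else 0 := by
  have hzero : ∀ j, j ≠ 0 → ichoose 0 j = 0 := fun j hj =>
    (lt_or_gt_of_ne hj).elim ichoose.of_neg ichoose.of_lt
  split_ifs with hdvd
  · obtain ⟨q, rfl⟩ := hdvd
    rw [chooseResidueSum, finsum_eq_single _ q fun j hj => hzero _ ?_]
    · simp [ichoose]
    · rw [← mul_sub]
      exact mul_ne_zero hd (sub_ne_zero.mpr hj.symm)
  · exact finsum_eq_zero_of_forall_eq_zero fun j =>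
      hzero _ fun h => hdvd ⟨j, by linarith⟩

end chooseResidueSum

section FiveResidues

open chooseResidueSum

local notation "S" => chooseResidueSum 5

lemma chooseResidueSum_five_odd_add_two (n : ℕ) :
    S (2 * n + 1 + 2) (n + 1) = 3 * S (2 * n + 1) n + S (2 * n + 1) (n + 2)
    ∧ S (2 * n + 1 + 2) (n + 3)
        = S (2 * n + 1) n + 2 * S (2 * n + 1) (n + 2) + S (2 * n + 1) (n + 3)
    ∧ S (2 * n + 1 + 2) (n + 4) = 2 * S (2 * n + 1) (n + 2) + 2 * S (2 * n + 1) (n + 3) := by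
  have h5 : (5 : ℤ) ≠ 0 := by norm_num
  have hsymm : ∀ s t : ℤ, s + t = 2 * n + 1 → S (2 * n + 1) s = S (2 * n + 1) t :=
    fun s t hst => eq_of_add_eq 5 _ (by push_cast; exact hst)
  have hn_add_one : S (2 * n + 1) (n + 1) = S (2 * n + 1) n := hsymm _ _ (by ring)
  have hn_sub_one : S (2 * n + 1) (n - 1) = S (2 * n + 1) (n + 2) := hsymm _ _ (by ring)
  have hn_add_four : S (2 * n + 1) (n + 4) = S (2 * n + 1) (n + 2) := by
    rw [← hn_sub_one, ← add_modulus 5 _ (n - 1)]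
    ring_nf
  refine ⟨?_, ?_, ?_⟩ <;> simp only [add_two h5, add_sub_assoc] <;>
    norm_num [← sub_eq_add_neg, hn_add_one, hn_sub_one, hn_add_four] <;> ring

lemma chooseResidueSum_five_sub_eq_fib (n : ℕ) :
    S (2 * n + 1) n - S (2 * n + 1) (n + 3) = Nat.fib (2 * n + 2)
    ∧ S (2 * n + 1) n - S (2 * n + 1) (n + 2) = Nat.fib (2 * n + 1) := by
  have h5 : (5 : ℤ) ≠ 0 := by norm_num
  induction n with
  | zero =>
    simp only [succ h5, zero h5]
    norm_num
  | succ n ih =>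
    obtain ⟨hA, hB, hC⟩ := chooseResidueSum_five_odd_add_two n
    have hfib₃ : (Nat.fib (2 * n + 3) : ℚ) = Nat.fib (2 * n + 1) + Nat.fib (2 * n + 2) := by
      exact_mod_cast Nat.fib_add_two
    have hfib₄ : (Nat.fib (2 * n + 4) : ℚ) = Nat.fib (2 * n + 2) + Nat.fib (2 * n + 3) := by
      exact_mod_cast Nat.fib_add_two
    rw [show 2 * (n + 1) + 1 = 2 * n + 1 + 2 by ring, Nat.cast_succ,
      show (n : ℤ) + 1 + 3 = n + 4 by ring, show (n : ℤ) + 1 + 2 = n + 3 by ring, hA, hB, hC,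
      show 2 * (n + 1) + 2 = 2 * n + 4 by ring, hfib₄, hfib₃]
    constructor <;> linarith [ih.1, ih.2]

end FiveResidues

/-- `F_{2n+2} = Σ_{j∈ℤ} [ C(2n+1, n−5j) − C(2n+1, n−5j−2) ]`. -/
theorem fib_even_eq_finsum_choose' (n : ℕ) :
    (Nat.fib (2 * n + 2) : ℚ) =
      ∑ᶠ j : ℤ, (ichoose (2 * n + 1) ((n : ℤ) - 5 * j)
        - ichoose (2 * n + 1) ((n : ℤ) - 5 * j - 2)) := by
  have hshift : ∀ j : ℤ, (n : ℤ) - 5 * j - 2 = n - 2 - 5 * j := fun j => by ring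
  simp only [hshift]
  rw [finsum_sub_distrib (chooseResidueSum.hasFiniteSupport (by norm_num) _ _)
    (chooseResidueSum.hasFiniteSupport (by norm_num) _ _)]
  change _ = chooseResidueSum 5 _ _ - chooseResidueSum 5 _ _
  rw [← chooseResidueSum.add_modulus 5 _ (n - 2), show (n : ℤ) - 2 + 5 = n + 3 by ring]
  exact (chooseResidueSum_five_sub_eq_fib n).1.symm
end

section
/- Let {d_{n,k}}_{n,k≥0} be a family of rational numbers with d_{n,k} = 0 for k > n and d_{0,0} ≠ 0, and suppose there is a sequence (a_k)_{k≥0} of rationals with a_0 ≠ 0 such that d_{n+1,k+1} = Σ_{j≥0} a_j · d_{n,k+j} for all n, k ≥ 0 (the sum is finite since d_{n,m} = 0 for m > n). Let A(t) = Σ_{k≥0} a_k t^k and let h(t) be the unique formal power series over ℚ satisfying h(t) = A(t·h(t)), and let d(t) = Σ_{n≥0} d_{n,0} t^n. Then d_{n,k} = [t^n] d(t)·(t·h(t))^k for all n, k ≥ 0, and moreover [t^{n−1}] h(t) = (1/n)·[t^{n−1}] (A(t))^n for all n ≥ 1. -/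
/-- Composition `f(w(t))` of formal power series over `ℚ`, intended for `w` with zero
constant term: the coefficient of `t^n` is `∑_{k=0}^{n} f_k · [t^n] w(t)^k`. -/
noncomputable def psComp (f w : PowerSeries ℚ) : PowerSeries ℚ :=
  PowerSeries.mk fun n =>
    ∑ k ∈ Finset.range (n + 1), PowerSeries.coeff k f * PowerSeries.coeff n (w ^ k)

/-!
Write `T = X·h`. Since `T^j` has order at least `j`, the fixed-point equation `h = A(T)`
gives `[t^n] g·h = Σ_j a_j [t^n] g·T^j` for every `g`, hence
`[t^{n+1}] g·T^{k+1} = Σ_j a_j [t^n] g·T^{k+j}`. With `g = d(t)` this is the recurrence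
of the array, so both sides agree by induction on `n`.

With `g = 1` the same identity proves Lagrange inversion `n [t^n] T^k = k [t^{n-k}] A^n` by
induction on `n`; the inductive step uses `m [t^m] A^{n+1} = (n+1) [t^m] A^n · tA'(t)`.
-/

open PowerSeries Finset

namespace PowerSeries

variable {R : Type*} [CommSemiring R]

theorem coeff_X_mul_pow_of_lt (h : R⟦X⟧) {l j : ℕ} (hl : l < j) :
    coeff l ((X * h) ^ j) = 0 := by
  rw [mul_pow, coeff_X_pow_mul', if_neg (by omega)]

theorem coeff_X_mul_derivative (f : R⟦X⟧) (m : ℕ) :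
    coeff m (X * derivative R f) = m * coeff m f := by
  cases m with
  | zero => simp
  | succ i => rw [coeff_succ_X_mul, coeff_derivative, mul_comm, Nat.cast_succ]

theorem natCast_mul_coeff_pow_succ (A : R⟦X⟧) (n m : ℕ) :
    (m : R) * coeff m (A ^ (n + 1))
      = (n + 1) * ∑ j ∈ range (m + 1), (j : R) * coeff j A * coeff (m - j) (A ^ n) := by
  have euler : X * derivative R (A ^ (n + 1))
      = ((n + 1 : ℕ) : R⟦X⟧) * ((X * derivative R A) * A ^ n) := by
    rw [Derivation.leibniz_pow, Nat.add_sub_cancel, smul_eq_mul, nsmul_eq_mul]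
    ring
  rw [← coeff_X_mul_derivative, euler, ← map_natCast (C (R := R)), coeff_C_mul,
    coeff_mul, Nat.sum_antidiagonal_eq_sum_range_succ_mk]
  simp only [coeff_X_mul_derivative, Nat.cast_succ]

end PowerSeries

theorem coeff_psComp (f w : ℚ⟦X⟧) (n : ℕ) :
    coeff n (psComp f w) = ∑ k ∈ range (n + 1), coeff k f * coeff n (w ^ k) :=
  coeff_mk _ _

theorem finsum_eq_sum_range_of_eq_zero {M : Type*} [AddCommMonoid M] {f : ℕ → M} {N : ℕ}
    (hf : ∀ j, N ≤ j → f j = 0) : ∑ᶠ j, f j = ∑ j ∈ range N, f j :=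
  finsum_eq_sum_of_support_subset f fun j hj => by
    simpa using mt (hf j) (Function.mem_support.1 hj)

section FixedPoint

variable {A h : ℚ⟦X⟧}

theorem coeff_eq_sum_of_eq_psComp (hh : h = psComp A (X * h)) {l N : ℕ} (hl : l < N) :
    coeff l h = ∑ j ∈ range N, coeff j A * coeff l ((X * h) ^ j) := by
  conv_lhs => rw [hh, coeff_psComp]
  refine sum_subset (range_subset_range.2 hl) fun j _ hj => ?_
  rw [coeff_X_mul_pow_of_lt h (by simpa using hj), mul_zero]

theorem coeff_mul_eq_sum_of_eq_psComp (hh : h = psComp A (X * h)) (g : ℚ⟦X⟧) (n : ℕ) :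
    coeff n (g * h) = ∑ j ∈ range (n + 1), coeff j A * coeff n (g * (X * h) ^ j) := by
  simp_rw [coeff_mul, mul_sum]
  rw [sum_comm]
  refine sum_congr rfl fun p hp => ?_
  rw [coeff_eq_sum_of_eq_psComp hh (Nat.antidiagonal.snd_lt hp), mul_sum]
  exact sum_congr rfl fun j _ => by ring

theorem coeff_succ_mul_X_mul_pow_succ (hh : h = psComp A (X * h)) (g : ℚ⟦X⟧) (n k : ℕ) :
    coeff (n + 1) (g * (X * h) ^ (k + 1))
      = ∑ j ∈ range (n + 1), coeff j A * coeff n (g * (X * h) ^ (k + j)) := by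
  rw [show g * (X * h) ^ (k + 1) = X * (g * (X * h) ^ k * h) by ring, coeff_succ_X_mul,
    coeff_mul_eq_sum_of_eq_psComp hh]
  simp_rw [mul_assoc, ← pow_add]

theorem eq_coeff_mul_X_mul_pow_of_rec (hh : h = psComp A (X * h)) {d : ℕ → ℕ → ℚ}
    (htri : ∀ n k, n < k → d n k = 0)
    (hrec : ∀ n k, d (n + 1) (k + 1) = ∑ j ∈ range (n + 1), coeff j A * d n (k + j))
    (n k : ℕ) : d n k = coeff n (mk (fun n => d n 0) * (X * h) ^ k) := by
  induction n generalizing k with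
  | zero =>
    cases k with
    | zero => simp
    | succ k => simp [htri 0 (k + 1) k.succ_pos]
  | succ n ih =>
    cases k with
    | zero => simp
    | succ k =>
      rw [hrec, coeff_succ_mul_X_mul_pow_succ hh]
      exact sum_congr rfl fun j _ => by rw [ih]

theorem coeff_X_mul_pow_succ_eq_sum (hh : h = psComp A (X * h)) (k m : ℕ) :
    coeff (k + m + 1) ((X * h) ^ (k + 1))
      = ∑ j ∈ range (m + 1), coeff j A * coeff (k + m) ((X * h) ^ (k + j)) := by
  have hexp := coeff_succ_mul_X_mul_pow_succ hh 1 (k + m) k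
  simp only [one_mul] at hexp
  rw [hexp]
  refine (sum_subset (range_subset_range.2 (by omega)) fun j _ hj => ?_).symm
  rw [coeff_X_mul_pow_of_lt h (by simp at hj; omega), mul_zero]

theorem natCast_mul_coeff_X_mul_pow (hh : h = psComp A (X * h)) {n k m : ℕ} (hkm : k + m = n) :
    (n : ℚ) * coeff n ((X * h) ^ k) = k * coeff m (A ^ n) := by
  induction n generalizing k m with
  | zero =>
    obtain ⟨rfl, rfl⟩ : k = 0 ∧ m = 0 := by omega
    simp
  | succ n ih =>
    rcases k with _ | k
    · simp [← hkm]
    obtain rfl : n = k + m := by omega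
    rcases Nat.eq_zero_or_pos (k + m) with hn | hn
    · obtain ⟨rfl, rfl⟩ : k = 0 ∧ m = 0 := by omega
      rw [pow_one, coeff_succ_X_mul, coeff_eq_sum_of_eq_psComp hh zero_lt_one]
      simp
    have hC : coeff m (A ^ (k + m + 1))
        = ∑ j ∈ range (m + 1), coeff j A * coeff (m - j) (A ^ (k + m)) := by
      rw [pow_succ', coeff_mul, Nat.sum_antidiagonal_eq_sum_range_succ_mk]
    set C := coeff m (A ^ (k + m + 1))
    set S := ∑ j ∈ range (m + 1), (j : ℚ) * coeff j A * coeff (m - j) (A ^ (k + m))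
    have hS : (m : ℚ) * C = (k + m + 1 : ℕ) * S := by
      rw [natCast_mul_coeff_pow_succ]; push_cast; ring
    have hstep : ((k + m : ℕ) : ℚ) * coeff (k + m + 1) ((X * h) ^ (k + 1)) = k * C + S := by
      rw [coeff_X_mul_pow_succ_eq_sum hh, mul_sum, hC, mul_sum, ← sum_add_distrib]
      refine sum_congr rfl fun j hj => ?_
      have hjm : j ≤ m := Nat.lt_succ_iff.1 (mem_range.1 hj)
      have := ih (k := k + j) (m := m - j) (by omega)
      push_cast at this ⊢
      linear_combination coeff j A * this
    have hn' : ((k + m : ℕ) : ℚ) ≠ 0 := by positivity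
    apply mul_left_cancel₀ hn'
    push_cast at hS hstep ⊢
    linear_combination ((k : ℚ) + m + 1) * hstep - hS

end FixedPoint

theorem riordan_array_characterization_general (d : ℕ → ℕ → ℚ) (a : ℕ → ℚ)
    (htri : ∀ n k, n < k → d n k = 0)
    (hrec : ∀ n k, d (n + 1) (k + 1) = ∑ᶠ j : ℕ, a j * d n (k + j))
    (A : PowerSeries ℚ) (hA : A = PowerSeries.mk a)
    (h : PowerSeries ℚ) (hh : h = psComp A (PowerSeries.X * h))
    (dgen : PowerSeries ℚ) (hdgen : dgen = PowerSeries.mk fun n => d n 0) :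
    (∀ n k, d n k = PowerSeries.coeff n (dgen * (PowerSeries.X * h) ^ k)) ∧
      ∀ n : ℕ, 1 ≤ n →
        PowerSeries.coeff (n - 1) h
          = (1 / (n : ℚ)) * PowerSeries.coeff (n - 1) (A ^ n) := by
  refine ⟨fun n k => hdgen ▸ eq_coeff_mul_X_mul_pow_of_rec hh htri (fun n k => ?_) n k,
    fun n hn => ?_⟩
  · rw [hrec, hA, finsum_eq_sum_range_of_eq_zero (N := n + 1) fun j hj => by
      rw [htri n (k + j) (by omega), mul_zero]]
    simp only [coeff_mk]
  · obtain ⟨m, rfl⟩ := Nat.exists_eq_add_of_le' hn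
    have hlag := natCast_mul_coeff_X_mul_pow hh (k := 1) (m := m) (n := m + 1) (by omega)
    rw [pow_one, coeff_succ_X_mul] at hlag
    rw [Nat.add_sub_cancel, one_div, eq_inv_mul_iff_mul_eq₀ (by positivity)]
    simpa [add_comm] using hlag

/-- A lower triangular array `d_{n,k}` with `d_{0,0} ≠ 0` satisfying the `A`-sequence
recurrence `d_{n+1,k+1} = Σ_{j≥0} a_j d_{n,k+j}` with `a_0 ≠ 0` is the proper Riordan
array `(d(t), h(t))` where `d(t)` generates the first column and `h(t) = A(t·h(t))`;
moreover `[t^{n−1}] h(t) = (1/n)·[t^{n−1}] A(t)^n`. -/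
theorem riordan_array_characterization (d : ℕ → ℕ → ℚ) (a : ℕ → ℚ)
    (htri : ∀ n k, n < k → d n k = 0) (hd00 : d 0 0 ≠ 0) (ha0 : a 0 ≠ 0)
    (hrec : ∀ n k, d (n + 1) (k + 1) = ∑ᶠ j : ℕ, a j * d n (k + j))
    (A : PowerSeries ℚ) (hA : A = PowerSeries.mk a)
    (h : PowerSeries ℚ) (hh : h = psComp A (PowerSeries.X * h))
    (dgen : PowerSeries ℚ) (hdgen : dgen = PowerSeries.mk fun n => d n 0) :
    (∀ n k, d n k = PowerSeries.coeff n (dgen * (PowerSeries.X * h) ^ k)) ∧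
      ∀ n : ℕ, 1 ≤ n →
        PowerSeries.coeff (n - 1) h
          = (1 / (n : ℚ)) * PowerSeries.coeff (n - 1) (A ^ n) :=
  riordan_array_characterization_general d a htri hrec A hA h hh dgen hdgen
end

section
/- Fix an integer q ≥ 2 and let B_q(t) be the unique formal power series over ℚ satisfying B_q(t) = 1 + t·(B_q(t))^q (the generalized binomial series). Then for every integer r ≥ 1, (B_q(t))^r = Σ_{n≥0} ( r/(qn+r) )·C(qn+r, n)·t^n. -/
/-!
Since `B ^ (r + 1) = B ^ r * B = B ^ r + X * B ^ (r + q)`, the coefficients `c r n` of `B ^ r`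
satisfy `c (r + 1) (n + 1) = c r (n + 1) + c (r + q) n`. The Raney numbers
`r / (q n + r) * C(q n + r, n)` satisfy the same recurrence (Pascal's rule together with
`(N + 1) C(N, n) = (n + 1) C(N + 1, n + 1)`) and the same boundary values, so an induction on `n`,
and inside it on `r`, identifies the two.
-/

open PowerSeries

/-- At `r = n = 0` this is `0 / 0 * 1 = 0`, not the constant coefficient `1` of `B ^ 0`. -/
def raney (q r n : ℕ) : ℚ := (r : ℚ) / ((q : ℚ) * n + r) * ((q * n + r).choose n : ℚ)

theorem raney_zero_right (q : ℕ) {r : ℕ} (hr : r ≠ 0) : raney q r 0 = 1 := by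
  simp [raney, hr]

theorem raney_zero_left (q n : ℕ) : raney q 0 n = 0 := by
  simp [raney]

theorem raney_succ_succ {q r : ℕ} (hqr : 0 < r + q) (n : ℕ) :
    raney q (r + 1) (n + 1) = raney q r (n + 1) + raney q (r + q) n := by
  set N := q * (n + 1) + r with hN
  have pascal : ((N + 1).choose (n + 1) : ℚ) = N.choose n + N.choose (n + 1) := by
    exact_mod_cast Nat.choose_succ_succ' N n
  have absorb : ((N + 1 : ℕ) : ℚ) * N.choose n = (N + 1).choose (n + 1) * (n + 1) := by
    exact_mod_cast Nat.add_one_mul_choose_eq N n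
  have hN0 : (N : ℚ) ≠ 0 := by norm_cast; nlinarith
  unfold raney
  rw [show q * (n + 1) + (r + 1) = N + 1 by ring, show q * n + (r + q) = N by ring]
  push_cast [hN] at hN0 absorb ⊢
  rw [show (q : ℚ) * n + (r + q) = q * (n + 1) + r by ring]
  field_simp
  linear_combination ((q : ℚ) * (n + 1) + r + 1) * r * pascal - (q : ℚ) * absorb

section FunctionalEquation

variable {R : Type*} [CommSemiring R] {q : ℕ} {B : R⟦X⟧}

theorem pow_succ_eq_add_X_mul_pow (hB : B = 1 + X * B ^ q) (r : ℕ) :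
    B ^ (r + 1) = B ^ r + X * B ^ (r + q) :=
  calc B ^ (r + 1) = B ^ r * (1 + X * B ^ q) := by rw [← hB, pow_succ]
    _ = B ^ r + X * B ^ (r + q) := by ring

theorem coeff_zero_pow_eq_one (hB : B = 1 + X * B ^ q) (r : ℕ) : coeff 0 (B ^ r) = 1 := by
  have hB₀ : constantCoeff B = 1 := by simpa using congrArg constantCoeff hB
  rw [coeff_zero_eq_constantCoeff, map_pow, hB₀, one_pow]

theorem coeff_succ_pow_succ (hB : B = 1 + X * B ^ q) (n r : ℕ) :
    coeff (n + 1) (B ^ (r + 1)) = coeff (n + 1) (B ^ r) + coeff n (B ^ (r + q)) := by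
  rw [pow_succ_eq_add_X_mul_pow hB, map_add, coeff_succ_X_mul]

end FunctionalEquation

theorem coeff_pow_eq_raney {q : ℕ} (hq : 0 < q) {B : ℚ⟦X⟧} (hB : B = 1 + X * B ^ q)
    (n : ℕ) {r : ℕ} (hr : r ≠ 0) : coeff n (B ^ r) = raney q r n := by
  induction n generalizing r with
  | zero => rw [coeff_zero_pow_eq_one hB, raney_zero_right q hr]
  | succ n ih =>
    clear hr
    induction r with
    | zero => simp [raney_zero_left, coeff_one]
    | succ r ihr =>
      rw [coeff_succ_pow_succ hB, ihr, ih (by omega), raney_succ_succ (by omega)]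

/-- For `q ≥ 2` and the generalized binomial series `B_q(t)`, the unique formal power
series satisfying `B_q(t) = 1 + t·B_q(t)^q`, one has
`(B_q(t))^r = Σ_{n≥0} (r/(qn+r))·C(qn+r, n)·t^n` for every integer `r ≥ 1`. -/
theorem coeff_pow_generalized_binomial_series (q : ℕ) (hq : 2 ≤ q) (B : PowerSeries ℚ)
    (hB : B = 1 + PowerSeries.X * B ^ q) (r : ℕ) (hr : 1 ≤ r) (n : ℕ) :
    PowerSeries.coeff n (B ^ r)
      = ((r : ℚ) / ((q : ℚ) * n + r)) * ((q * n + r).choose n : ℚ) :=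
  coeff_pow_eq_raney (by omega) hB n (by omega)
end

section
/- For all integers p ≥ 2, r ≥ 0 and n ≥ k ≥ s ≥ 1, the following identity holds in ℚ: Σ_{j=s}^{n} [ ps/((p−1)j + s) ]·C(pj−1, j−s)·C(p(n−j)+r, n−j−k+s) = C(pn+r, n−k). -/
open Finset

def rotheB (p y b : ℕ) : ℚ := ((y + p * b).choose b : ℚ)

/-- For `x > 0` this is `x/(x+pa) · C(x+pa, a)` (see `rotheA_eq_div`); the division-free form
also gives the right value `[a = 0]` at `x = 0`. -/
def rotheA (p x : ℕ) : ℕ → ℚ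
  | 0 => 1
  | a + 1 => rotheB p x (a + 1) - p * rotheB p (x + p - 1) a

section Rothe

variable {p : ℕ}

@[simp] lemma rotheB_zero (y : ℕ) : rotheB p y 0 = 1 := by simp [rotheB]

@[simp] lemma rotheA_zero (x : ℕ) : rotheA p x 0 = 1 := rfl

lemma rotheB_succ_succ (y b : ℕ) :
    rotheB p (y + 1) (b + 1) = rotheB p y (b + 1) + rotheB p (y + p) b := by
  rw [rotheB, rotheB, rotheB, show y + 1 + p * (b + 1) = y + p * (b + 1) + 1 by ring,
    Nat.choose_succ_succ, show y + p + p * b = y + p * (b + 1) by ring]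
  push_cast
  ring

lemma rotheA_succ_succ (hp : 0 < p) (x a : ℕ) :
    rotheA p (x + 1) (a + 1) = rotheA p x (a + 1) + rotheA p (x + p) a := by
  cases a with
  | zero =>
    simp only [rotheA, rotheB, show x + 1 + p - 1 = x + p by omega, zero_add, mul_one,
      Nat.choose_one_right, Nat.choose_zero_right]
    push_cast
    ring
  | succ c =>
    have h := rotheB_succ_succ (p := p) (x + p - 1) c
    rw [show x + p - 1 + 1 = x + p by omega, show x + p - 1 + p = x + p + p - 1 by omega] at h
    simp only [rotheA, show x + 1 + p - 1 = x + p by omega, rotheB_succ_succ x (c + 1), h]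
    ring

lemma rotheA_zero_left (hp : 0 < p) (a : ℕ) : rotheA p 0 (a + 1) = 0 := by
  have h := Nat.add_one_mul_choose_eq (p - 1 + p * a) a
  rw [show p - 1 + p * a + 1 = p * (a + 1) by rw [mul_add_one]; omega] at h
  have hq : ((p * (a + 1) : ℕ) : ℚ) * (p - 1 + p * a).choose a
      = (p * (a + 1)).choose (a + 1) * (a + 1) := by exact_mod_cast h
  simp only [rotheA, rotheB, zero_add]
  push_cast at hq ⊢
  apply mul_right_cancel₀ (show (a : ℚ) + 1 ≠ 0 by positivity)
  linear_combination -hq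

lemma rotheA_eq_div (hp : 0 < p) {x : ℕ} (hx : 0 < x) (a : ℕ) :
    rotheA p x a = (x : ℚ) / (x + ((p : ℚ) - 1) * a) * ((x + p * a - 1).choose a : ℚ) := by
  have hx' : (0 : ℚ) < x := by exact_mod_cast hx
  have hp' : (1 : ℚ) ≤ p := by exact_mod_cast hp
  cases a with
  | zero => simp [hx'.ne']
  | succ a =>
    obtain ⟨N, hN⟩ : ∃ N, x + p * (a + 1) = N + 1 := ⟨x + p * (a + 1) - 1, by omega⟩
    have haN : a ≤ N := by nlinarith
    have hN' : x + p - 1 + p * a = N := by rw [mul_add_one] at hN; omega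
    have h1 : ((N + 1 : ℕ) : ℚ) * N.choose a = (N + 1).choose (a + 1) * ((a : ℚ) + 1) := by
      exact_mod_cast Nat.add_one_mul_choose_eq N a
    have h2 : (N.choose (a + 1) : ℚ) * ((a : ℚ) + 1) = N.choose a * ((N - a : ℕ) : ℚ) := by
      exact_mod_cast Nat.choose_succ_right_eq N a
    have hNq : (N : ℚ) + 1 = x + p * (a + 1) := by exact_mod_cast hN.symm
    have hD : (x : ℚ) + ((p : ℚ) - 1) * ((a + 1 : ℕ) : ℚ) ≠ 0 := by push_cast; nlinarith
    rw [rotheA, rotheB, rotheB, hN, hN', show N + 1 - 1 = N by omega, div_mul_eq_mul_div,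
      eq_div_iff hD]
    apply mul_right_cancel₀ (show (a : ℚ) + 1 ≠ 0 by positivity)
    push_cast [Nat.cast_sub haN] at h1 h2 ⊢
    linear_combination -(x + (p - 1) * (a + 1)) * h1 - x * h2
      + (N.choose a : ℚ) * (p - 1) * (a + 1) * hNq

theorem sum_antidiagonal_rotheA_mul_rotheA (hp : 0 < p) (M : ℕ) :
    ∀ x y, ∑ ab ∈ antidiagonal M, rotheA p x ab.1 * rotheA p y ab.2 = rotheA p (x + y) M := by
  induction M with
  | zero => simp
  | succ M ihM =>
    intro x y
    induction x with
    | zero => simp [Nat.sum_antidiagonal_succ, rotheA_zero_left hp]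
    | succ x ihx =>
      calc ∑ ab ∈ antidiagonal (M + 1), rotheA p (x + 1) ab.1 * rotheA p y ab.2
          = (rotheA p y (M + 1) + ∑ ab ∈ antidiagonal M, rotheA p x (ab.1 + 1) * rotheA p y ab.2)
              + ∑ ab ∈ antidiagonal M, rotheA p (x + p) ab.1 * rotheA p y ab.2 := by
            simp only [Nat.sum_antidiagonal_succ, rotheA_succ_succ hp, add_mul, sum_add_distrib,
              rotheA_zero, one_mul, add_assoc]
        _ = rotheA p (x + y) (M + 1) + rotheA p (x + y + p) M := by
            rw [← ihx, ihM, Nat.sum_antidiagonal_succ, rotheA_zero, one_mul, add_right_comm x]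
        _ = rotheA p (x + 1 + y) (M + 1) := by
            rw [show x + 1 + y = x + y + 1 by ring, rotheA_succ_succ hp]

theorem sum_antidiagonal_rotheA_mul_rotheB (hp : 0 < p) (M : ℕ) :
    ∀ x y, ∑ ab ∈ antidiagonal M, rotheA p x ab.1 * rotheB p y ab.2 = rotheB p (x + y) M := by
  induction M with
  | zero => simp
  | succ M ihM =>
    intro x y
    have hB : ∀ b, rotheB p y (b + 1) = rotheA p y (b + 1) + p * rotheB p (y + p - 1) b :=
      fun b => by rw [rotheA]; ring
    calc ∑ ab ∈ antidiagonal (M + 1), rotheA p x ab.1 * rotheB p y ab.2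
        = (rotheA p x (M + 1) * rotheA p y 0 +
            ∑ ab ∈ antidiagonal M, rotheA p x ab.1 * rotheA p y (ab.2 + 1))
          + p * ∑ ab ∈ antidiagonal M, rotheA p x ab.1 * rotheB p (y + p - 1) ab.2 := by
          simp only [Nat.sum_antidiagonal_succ', hB, mul_add, sum_add_distrib, mul_sum,
            rotheA_zero, rotheB_zero, mul_one, mul_left_comm _ (p : ℚ), add_assoc]
      _ = rotheA p (x + y) (M + 1) + p * rotheB p (x + y + p - 1) M := by
          rw [← Nat.sum_antidiagonal_succ' (f := fun ab => rotheA p x ab.1 * rotheA p y ab.2),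
            sum_antidiagonal_rotheA_mul_rotheA hp, ihM, Nat.add_sub_assoc hp,
            Nat.add_sub_assoc hp, add_assoc]
      _ = rotheB p (x + y) (M + 1) := by rw [rotheA]; ring

end Rothe

lemma ichoose_of_neg {m : ℕ} {j : ℤ} (hj : j < 0) : ichoose m j = 0 := if_pos hj

lemma ichoose_natCast (m j : ℕ) : ichoose m j = m.choose j := by simp [ichoose]

lemma Finset.sum_Icc_eq_sum_range_of_eq_zero {M : Type*} [AddCommMonoid M] {f : ℕ → M}
    {s m n : ℕ} (hmn : s + m ≤ n) (hf : ∀ j, s + m < j → j ≤ n → f j = 0) :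
    ∑ j ∈ Icc s n, f j = ∑ i ∈ range (m + 1), f (s + i) := by
  rw [← sum_subset (Icc_subset_Icc_right hmn) fun j hj hj' => by
    simp only [mem_Icc, not_and, not_le] at hj hj'
    exact hf j (hj' hj.1) hj.2]
  rw [← Ico_add_one_right_eq_Icc, sum_Ico_eq_sum_range, show s + m + 1 - s = m + 1 by omega]

lemma pascal_extraction_summand {p r n k s : ℕ} (hp : 0 < p) (hs : 0 < s) (hsk : s ≤ k)
    (hkn : k ≤ n) {i : ℕ} (hi : i ≤ n - k) :
    ((p : ℚ) * s / (((p : ℚ) - 1) * ((s + i : ℕ) : ℚ) + s))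
        * ((p * (s + i) - 1).choose (s + i - s) : ℚ)
        * ichoose (p * (n - (s + i)) + r) ((n : ℤ) - (s + i : ℕ) - k + s)
      = rotheA p (p * s) i * rotheB p (p * (k - s) + r) (n - k - i) := by
  rw [show p * (s + i) - 1 = p * s + p * i - 1 by rw [mul_add], Nat.add_sub_cancel_left,
    show ((n : ℤ) - (s + i : ℕ) - k + s) = ((n - k - i : ℕ) : ℤ) by omega, ichoose_natCast,
    show n - (s + i) = (k - s) + (n - k - i) by omega, mul_add, add_right_comm,
    rotheA_eq_div hp (Nat.mul_pos hp hs), rotheB]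
  push_cast
  ring

/-- For `p ≥ 2`, `r ≥ 0`, `n ≥ k ≥ s ≥ 1`:
`Σ_{j=s}^{n} (ps/((p−1)j+s))·C(pj−1, j−s)·C(p(n−j)+r, n−j−k+s) = C(pn+r, n−k)`. -/
theorem pascal_extraction_identity (p r n k s : ℕ)
    (hp : 2 ≤ p) (hs : 1 ≤ s) (hsk : s ≤ k) (hkn : k ≤ n) :
    ∑ j ∈ Finset.Icc s n,
        ((p : ℚ) * s / (((p : ℚ) - 1) * j + s)) * ((p * j - 1).choose (j - s) : ℚ)
          * ichoose (p * (n - j) + r) ((n : ℤ) - j - k + s)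
      = ((p * n + r).choose (n - k) : ℚ) := by
  have hp0 : 0 < p := by omega
  rw [sum_Icc_eq_sum_range_of_eq_zero (m := n - k) (by omega) fun j hj _ => by
      rw [ichoose_of_neg (by omega), mul_zero],
    sum_congr rfl fun i hi =>
      pascal_extraction_summand hp0 hs hsk hkn (Nat.lt_succ_iff.mp (mem_range.mp hi)),
    ← Nat.sum_antidiagonal_eq_sum_range_succ
      (fun a b => rotheA p (p * s) a * rotheB p (p * (k - s) + r) b),
    sum_antidiagonal_rotheA_mul_rotheB hp0, rotheB,
    show p * s + (p * (k - s) + r) + p * (n - k) = p * (s + (k - s) + (n - k)) + r by ring,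
    show s + (k - s) + (n - k) = n by omega]
end

section
/- Let p ≥ 2 be an integer and let x and y be real numbers such that (p+1)i + x ≠ 0 for 0 ≤ i ≤ n, p(n−i) + y + 1 ≠ 0 for 0 ≤ i ≤ n, and pn + x + y + 1 ≠ 0. Then Σ_{i=0}^{n} [ x/((p+1)i + x) ]·C((p+1)i + x, i) · [ ((p−1)(n−i) + y + 1)/(p(n−i) + y + 1) ]·C((p+1)(n−i) + y, n−i) = [ ((p−1)n + x + y + 1)/(pn + x + y + 1) ]·C((p+1)n + x + y, n), where for a real number z and a natural number m, C(z, m) = z(z−1)⋯(z−m+1)/m! is the generalized binomial coefficient. -/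
/-!
Put `z = p + 1`. The first factor of the summand is the Rothe coefficient
`A_k(x) = x / (x + k z) · C(x + k z, k) = x / k · C(x + k z - 1, k - 1)`, a polynomial in `x`,
and the second is `D_m(y) = C(y + m z, m) - C(y + m z, m - 1)`; the right-hand side is `D_n(x + y)`.
Both `A` and `D` satisfy the Pascal-type recurrence `F_{m+1}(w + 1) = F_{m+1}(w) + F_m(w + z)`.
For every family `G` of polynomial maps with this recurrence and `G_0` constant,
`∑ A_k(x) G_{n-k}(y) = G_n(x + y)`: by induction on `n`, the difference of the two sides is a
polynomial in `x` which is `1`-periodic (by the recurrences and the induction hypothesis at `x + z`)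
and vanishes at `x = 0`, hence vanishes identically.
-/

open Finset Polynomial

/-- Generalized binomial coefficient `C(z, m) = z(z−1)⋯(z−m+1)/m!` for a real number `z`
and a natural number `m`, with `C(z, 0) = 1`. -/
noncomputable def genChoose (z : ℝ) (m : ℕ) : ℝ :=
  (∏ i ∈ Finset.range m, (z - i)) / (Nat.factorial m : ℝ)

@[simp]
theorem genChoose_zero (z : ℝ) : genChoose z 0 = 1 := by
  simp [genChoose]

theorem genChoose_succ_mul (z : ℝ) (k : ℕ) :
    genChoose z (k + 1) * (k + 1) = genChoose z k * (z - k) := by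
  rw [genChoose, genChoose, prod_range_succ, Nat.factorial_succ]
  push_cast
  field_simp

theorem genChoose_add_one_succ_mul (z : ℝ) (k : ℕ) :
    genChoose (z + 1) (k + 1) * (k + 1) = (z + 1) * genChoose z k := by
  rw [genChoose, genChoose, prod_range_succ', Nat.factorial_succ]
  push_cast
  simp only [add_sub_add_right_eq_sub, sub_zero]
  field_simp

theorem genChoose_add_one_succ (z : ℝ) (k : ℕ) :
    genChoose (z + 1) (k + 1) = genChoose z k + genChoose z (k + 1) := by
  have hk : (k : ℝ) + 1 ≠ 0 := by positivity
  apply mul_right_cancel₀ hk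
  linear_combination genChoose_add_one_succ_mul z k - genChoose_succ_mul z k

noncomputable def polynomialMaps : Subring (ℝ → ℝ) :=
  (RingHom.pi fun x : ℝ => Polynomial.evalRingHom x).range

theorem mem_polynomialMaps {f : ℝ → ℝ} :
    f ∈ polynomialMaps ↔ ∃ q : ℝ[X], ∀ x, q.eval x = f x := by
  simp [polynomialMaps, funext_iff]

theorem comp_add_mem_polynomialMaps {f : ℝ → ℝ} (hf : f ∈ polynomialMaps) (c : ℝ) :
    (fun x => f (x + c)) ∈ polynomialMaps := by
  obtain ⟨q, hq⟩ := mem_polynomialMaps.1 hf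
  exact mem_polynomialMaps.2 ⟨q.comp (X + C c), fun x => by simp [hq]⟩

theorem id_mem_polynomialMaps : (fun x => x) ∈ polynomialMaps :=
  mem_polynomialMaps.2 ⟨X, fun x => by simp⟩

theorem const_mem_polynomialMaps (c : ℝ) : (fun _ => c) ∈ polynomialMaps :=
  mem_polynomialMaps.2 ⟨C c, fun x => by simp⟩

theorem genChoose_mem_polynomialMaps (k : ℕ) : (genChoose · k) ∈ polynomialMaps :=
  mem_polynomialMaps.2 ⟨C (k.factorial : ℝ)⁻¹ * descPochhammer ℝ k, fun x => by
    simp [genChoose, descPochhammer_eval_eq_prod_range, div_eq_inv_mul]⟩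

theorem Function.Periodic.eq_of_mem_polynomialMaps {f : ℝ → ℝ} (hf : f ∈ polynomialMaps)
    (hper : Function.Periodic f 1) (x : ℝ) : f x = f 0 := by
  obtain ⟨q, hq⟩ := mem_polynomialMaps.1 hf
  have hnat : ∀ m : ℕ, f m = f 0 := fun m => by simpa using hper.nat_mul_eq m
  have : q = C (f 0) := by
    refine eq_of_infinite_eval_eq _ _ ((Set.infinite_range_of_injective Nat.cast_injective).mono ?_)
    rintro _ ⟨m, rfl⟩
    simp [hq, hnat]
  rw [← hq, this, eval_C]

noncomputable def rotheCoeff (z x : ℝ) : ℕ → ℝ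
  | 0 => 1
  | k + 1 => x / (k + 1) * genChoose (x + (k + 1) * z - 1) k

@[simp]
theorem rotheCoeff_zero (z x : ℝ) : rotheCoeff z x 0 = 1 := rfl

@[simp]
theorem rotheCoeff_zero_succ (z : ℝ) (k : ℕ) : rotheCoeff z 0 (k + 1) = 0 := by
  simp [rotheCoeff]

theorem rotheCoeff_mem_polynomialMaps (z : ℝ) (k : ℕ) :
    (rotheCoeff z · k) ∈ polynomialMaps := by
  cases k with
  | zero => exact const_mem_polynomialMaps 1
  | succ k =>
    have h : (rotheCoeff z · (k + 1)) = ((fun x => x) * fun _ => ((k : ℝ) + 1)⁻¹) *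
        fun x => genChoose (x + ((k + 1) * z - 1)) k := by
      ext x
      simp only [rotheCoeff, Pi.mul_apply, div_eq_mul_inv, add_sub_assoc]
    rw [h]
    exact mul_mem (mul_mem id_mem_polynomialMaps (const_mem_polynomialMaps _))
      (comp_add_mem_polynomialMaps (genChoose_mem_polynomialMaps k) _)

theorem rotheCoeff_add_one_succ (z x : ℝ) (k : ℕ) :
    rotheCoeff z (x + 1) (k + 1) = rotheCoeff z x (k + 1) + rotheCoeff z (x + z) k := by
  cases k with
  | zero => simp [rotheCoeff]
  | succ j =>
    have hw : x + 1 + ((j + 1 : ℕ) + 1) * z - 1 = x + (j + 2) * z - 1 + 1 := by push_cast; ring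
    have hw' : x + ((j + 1 : ℕ) + 1) * z - 1 = x + (j + 2) * z - 1 := by push_cast; ring
    have hw'' : x + z + ((j : ℕ) + 1) * z - 1 = x + (j + 2) * z - 1 := by ring
    simp only [rotheCoeff, hw, hw', hw'', genChoose_add_one_succ]
    have hj : ((j + 1 : ℕ) : ℝ) + 1 ≠ 0 := by positivity
    field_simp
    push_cast
    linear_combination genChoose_succ_mul (x + (j + 2) * z - 1) j

theorem sum_rotheCoeff_mul_eq {z : ℝ} {G : ℕ → ℝ → ℝ} (hG : ∀ m, G m ∈ polynomialMaps)
    (hG_zero : ∀ w, G 0 w = G 0 0)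
    (hG_add_one : ∀ m w, G (m + 1) (w + 1) = G (m + 1) w + G m (w + z)) (n : ℕ) (x y : ℝ) :
    ∑ k ∈ range (n + 1), rotheCoeff z x k * G (n - k) y = G n (x + y) := by
  induction n generalizing x with
  | zero => simp [hG_zero y, hG_zero (x + y)]
  | succ n ih =>
    let F : ℝ → ℝ := (∑ k ∈ range (n + 2), (rotheCoeff z · k) * fun _ => G (n + 1 - k) y) -
      fun x => G (n + 1) (x + y)
    have hF : ∀ x, F x = ∑ k ∈ range (n + 2), rotheCoeff z x k * G (n + 1 - k) y -
        G (n + 1) (x + y) := fun x => by simp [F, Finset.sum_apply]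
    have hF_mem : F ∈ polynomialMaps :=
      sub_mem (sum_mem fun k _ => mul_mem (rotheCoeff_mem_polynomialMaps z k)
        (const_mem_polynomialMaps _)) (comp_add_mem_polynomialMaps (hG _) y)
    have hF_periodic : Function.Periodic F 1 := by
      intro x
      have hG_shift := hG_add_one n (x + y)
      rw [add_right_comm x y z, ← ih (x + z)] at hG_shift
      simp only [hF, sum_range_succ' _ (n + 1), rotheCoeff_add_one_succ, add_mul, sum_add_distrib,
        Nat.add_sub_add_right, rotheCoeff_zero, add_right_comm x 1 y, hG_shift]
      ring
    have hF_zero : F 0 = 0 := by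
      simp [hF, sum_range_succ']
    have := hF_periodic.eq_of_mem_polynomialMaps hF_mem x
    rwa [hF_zero, hF, sub_eq_zero] at this

theorem rotheCoeff_eq_div_mul_genChoose {z x : ℝ} {k : ℕ} (h : z * k + x ≠ 0) :
    x / (z * k + x) * genChoose (z * k + x) k = rotheCoeff z x k := by
  cases k with
  | zero =>
    simp only [Nat.cast_zero, mul_zero, zero_add] at h ⊢
    simp [div_self h]
  | succ k =>
    have harg : z * ((k + 1 : ℕ) : ℝ) + x = x + (k + 1) * z := by push_cast; ring
    rw [harg] at h ⊢
    have hk : (k : ℝ) + 1 ≠ 0 := by positivity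
    have habs := genChoose_add_one_succ_mul (x + (k + 1) * z - 1) k
    rw [sub_add_cancel] at habs
    rw [rotheCoeff, ← mul_left_inj' hk, mul_assoc, habs]
    field_simp

noncomputable def rotheDiff (z : ℝ) : ℕ → ℝ → ℝ
  | 0, _ => 1
  | m + 1, y => genChoose (y + (m + 1) * z) (m + 1) - genChoose (y + (m + 1) * z) m

theorem rotheDiff_mem_polynomialMaps (z : ℝ) (m : ℕ) : rotheDiff z m ∈ polynomialMaps := by
  cases m with
  | zero => exact const_mem_polynomialMaps 1
  | succ m =>
    exact sub_mem (comp_add_mem_polynomialMaps (genChoose_mem_polynomialMaps _) _)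
      (comp_add_mem_polynomialMaps (genChoose_mem_polynomialMaps _) _)

theorem rotheDiff_add_one_succ (z : ℝ) (m : ℕ) (w : ℝ) :
    rotheDiff z (m + 1) (w + 1) = rotheDiff z (m + 1) w + rotheDiff z m (w + z) := by
  cases m with
  | zero =>
    simp only [rotheDiff, add_right_comm w 1, genChoose_add_one_succ, genChoose_zero]
    push_cast
    ring
  | succ j =>
    have hshift : w + z + ((j : ℝ) + 1) * z = w + ((j + 1 : ℕ) + 1) * z := by push_cast; ring
    simp only [rotheDiff, add_right_comm w 1, genChoose_add_one_succ, hshift]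
    ring

theorem rotheDiff_eq_div_mul_genChoose {c y : ℝ} {m : ℕ} (h : c * m + y + 1 ≠ 0) :
    ((c - 1) * m + y + 1) / (c * m + y + 1) * genChoose ((c + 1) * m + y) m =
      rotheDiff (c + 1) m y := by
  cases m with
  | zero =>
    simp only [Nat.cast_zero, mul_zero, zero_add] at h ⊢
    simp [rotheDiff, div_self h]
  | succ t =>
    push_cast at h ⊢
    have harg : y + ((t : ℝ) + 1) * (c + 1) = (c + 1) * (t + 1) + y := by ring
    rw [rotheDiff, harg, div_mul_eq_mul_div, div_eq_iff h]
    linear_combination (-1 : ℝ) * genChoose_succ_mul ((c + 1) * (t + 1) + y) t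

theorem convolution_identity_real_general (p : ℕ) (n : ℕ) (x y : ℝ)
    (hx : ∀ i ≤ n, ((p : ℝ) + 1) * i + x ≠ 0)
    (hy : ∀ i ≤ n, (p : ℝ) * ((n : ℝ) - i) + y + 1 ≠ 0)
    (hxy : (p : ℝ) * n + x + y + 1 ≠ 0) :
    ∑ i ∈ Finset.range (n + 1),
        (x / (((p : ℝ) + 1) * i + x)) * genChoose (((p : ℝ) + 1) * i + x) i
          * ((((p : ℝ) - 1) * ((n : ℝ) - i) + y + 1) / ((p : ℝ) * ((n : ℝ) - i) + y + 1))
          * genChoose (((p : ℝ) + 1) * ((n : ℝ) - i) + y) (n - i)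
      = ((((p : ℝ) - 1) * n + x + y + 1) / ((p : ℝ) * n + x + y + 1))
          * genChoose (((p : ℝ) + 1) * n + x + y) n := by
  calc _ = ∑ i ∈ range (n + 1), rotheCoeff (p + 1) x i * rotheDiff (p + 1) (n - i) y := by
        refine sum_congr rfl fun i hi => ?_
        have hin : i ≤ n := Nat.lt_succ_iff.1 (mem_range.1 hi)
        have hyi := hy i hin
        rw [← Nat.cast_sub hin] at hyi ⊢
        rw [mul_assoc, rotheCoeff_eq_div_mul_genChoose (hx i hin),
          rotheDiff_eq_div_mul_genChoose hyi]
    _ = rotheDiff (p + 1) n (x + y) :=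
        sum_rotheCoeff_mul_eq (rotheDiff_mem_polynomialMaps _) (fun _ => rfl)
          (rotheDiff_add_one_succ _) n x y
    _ = _ := by
        rw [← rotheDiff_eq_div_mul_genChoose (by rwa [← add_assoc])]
        simp only [add_assoc]

/-- For an integer `p ≥ 2` and real `x`, `y` with nonvanishing denominators:
`Σ_{i=0}^{n} (x/((p+1)i+x))·C((p+1)i+x, i) ·
  (((p−1)(n−i)+y+1)/(p(n−i)+y+1))·C((p+1)(n−i)+y, n−i)
  = (((p−1)n+x+y+1)/(pn+x+y+1))·C((p+1)n+x+y, n)`. -/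
theorem convolution_identity_real (p : ℕ) (hp : 2 ≤ p) (n : ℕ) (x y : ℝ)
    (hx : ∀ i ≤ n, ((p : ℝ) + 1) * i + x ≠ 0)
    (hy : ∀ i ≤ n, (p : ℝ) * ((n : ℝ) - i) + y + 1 ≠ 0)
    (hxy : (p : ℝ) * n + x + y + 1 ≠ 0) :
    ∑ i ∈ Finset.range (n + 1),
        (x / (((p : ℝ) + 1) * i + x)) * genChoose (((p : ℝ) + 1) * i + x) i
          * ((((p : ℝ) - 1) * ((n : ℝ) - i) + y + 1) / ((p : ℝ) * ((n : ℝ) - i) + y + 1))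
          * genChoose (((p : ℝ) + 1) * ((n : ℝ) - i) + y) (n - i)
      = ((((p : ℝ) - 1) * n + x + y + 1) / ((p : ℝ) * n + x + y + 1))
          * genChoose (((p : ℝ) + 1) * n + x + y) n :=
  convolution_identity_real_general p n x y hx hy hxy
end

section
/- Fix an integer p ≥ 2. For an integer y ≥ 0, define the formal power series over ℚ: 𝒜(p, y; t) = Σ_{n≥0} [ ((p−1)n + y + 1)/(pn + y + 1) ]·C((p+1)n + y, n)·t^n, and let B_{p+1}(t) be the unique formal power series satisfying B_{p+1}(t) = 1 + t·(B_{p+1}(t))^{p+1}. Then for all integers x ≥ 0 and y ≥ 0, (B_{p+1}(t))^x · 𝒜(p, y; t) = 𝒜(p, x + y; t) as formal power series over ℚ. -/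
/-!
The coefficient of `tⁿ` in `𝒜(p, y; t)` is the ballot difference `C(M, n) - C(M, n - 1)` with
`M = (p+1)n + y`, so `𝒜(p, y) = C_y - t·C_{y+p+1}` where `C_y = Σ C((p+1)n + y, n) tⁿ`.
Pascal's rule gives `C_{y+1} = C_y + t·C_{y+p+1}`, hence the same recurrence for `𝒜(p, ·)`.
Since `B = 1 + t·B^{p+1}`, the family `y ↦ B^y·𝒜(p, 0)` satisfies it too, and a family solving
the recurrence is determined by its member at `y = 0` (induct on the degree of the coefficient).
So `𝒜(p, y) = B^y·𝒜(p, 0)` for every `y`, and the theorem follows.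
-/

open PowerSeries

/-- The formal power series
`𝒜(p, y; t) = Σ_{n≥0} (((p−1)n+y+1)/(pn+y+1))·C((p+1)n+y, n)·t^n` over `ℚ`. -/
noncomputable def seriesA (p y : ℕ) : PowerSeries ℚ :=
  PowerSeries.mk fun n =>
    ((((p : ℚ) - 1) * n + y + 1) / ((p : ℚ) * n + y + 1)) * (((p + 1) * n + y).choose n : ℚ)

theorem Nat.cast_choose_succ_sub_cast_choose (N n : ℕ) :
    ((N + n + 1).choose (n + 1) : ℚ) - (N + n + 1).choose n
      = ((N : ℚ) - n) / (N + 1) * (N + n + 1).choose (n + 1) := by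
  have hpascal : ((N + n + 1).choose (n + 1) : ℚ) * (n + 1) = (N + n + 1).choose n * (N + 1) := by
    have h := Nat.choose_succ_right_eq (N + n + 1) n
    rw [show N + n + 1 - n = N + 1 by omega] at h
    exact_mod_cast h
  field_simp
  linear_combination hpascal

noncomputable def chooseSeries (p y : ℕ) : PowerSeries ℚ :=
  mk fun n => (((p + 1) * n + y).choose n : ℚ)

theorem chooseSeries_succ (p y : ℕ) :
    chooseSeries p (y + 1) = chooseSeries p y + X * chooseSeries p (y + p + 1) := by
  ext (_ | n)
  · simp [chooseSeries]
  · rw [map_add, coeff_succ_X_mul]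
    simp only [chooseSeries, coeff_mk]
    rw [show (p + 1) * (n + 1) + (y + 1) = (p + 1) * (n + 1) + y + 1 by ring,
      show (p + 1) * n + (y + p + 1) = (p + 1) * (n + 1) + y by ring, Nat.choose_succ_succ',
      Nat.cast_add, add_comm]

theorem coeff_seriesA_succ (p y n : ℕ) :
    coeff (n + 1) (seriesA p y)
      = (((p + 1) * (n + 1) + y).choose (n + 1) : ℚ) - ((p + 1) * (n + 1) + y).choose n := by
  have hM : (p + 1) * (n + 1) + y = (p * (n + 1) + y) + n + 1 := by ring
  rw [hM, Nat.cast_choose_succ_sub_cast_choose, seriesA, coeff_mk, ← hM]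
  congr 1
  push_cast
  ring

theorem seriesA_eq_chooseSeries_sub (p y : ℕ) :
    seriesA p y = chooseSeries p y - X * chooseSeries p (y + p + 1) := by
  ext (_ | n)
  · have : (y : ℚ) + 1 ≠ 0 := by positivity
    simp [seriesA, chooseSeries, this]
  · rw [coeff_seriesA_succ, map_sub, coeff_succ_X_mul]
    simp only [chooseSeries, coeff_mk]
    rw [show (p + 1) * n + (y + p + 1) = (p + 1) * (n + 1) + y by ring]

theorem seriesA_succ (p y : ℕ) :
    seriesA p (y + 1) = seriesA p y + X * seriesA p (y + p + 1) := by
  simp only [seriesA_eq_chooseSeries_sub]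
  rw [chooseSeries_succ p y, show y + 1 + p + 1 = y + p + 1 + 1 by ring,
    chooseSeries_succ p (y + p + 1)]
  ring

theorem PowerSeries.eq_of_shift_recurrence {R : Type*} [Semiring R] (s : ℕ)
    {F G : ℕ → PowerSeries R}
    (hF : ∀ y, F (y + 1) = F y + X * F (y + s)) (hG : ∀ y, G (y + 1) = G y + X * G (y + s))
    (h0 : F 0 = G 0) (y : ℕ) : F y = G y := by
  ext n
  induction n using Nat.strong_induction_on generalizing y with
  | _ n ih =>
    induction y with
    | zero => rw [h0]
    | succ y ihy =>
      rw [hF, hG, map_add, map_add, ihy]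
      rcases n with _ | m
      · simp
      · rw [coeff_succ_X_mul, coeff_succ_X_mul, ih m m.lt_succ_self]

theorem pow_succ_mul_of_eq_one_add_X_mul_pow {R : Type*} [CommSemiring R] {s : ℕ}
    {B : PowerSeries R} (hB : B = 1 + X * B ^ s) (G : PowerSeries R) (y : ℕ) :
    B ^ (y + 1) * G = B ^ y * G + X * (B ^ (y + s) * G) := by
  rw [pow_succ, pow_add]
  nth_rw 2 [hB]
  ring

theorem seriesA_mul_binomial_pow_general (p : ℕ) (B : PowerSeries ℚ)
    (hB : B = 1 + PowerSeries.X * B ^ (p + 1)) (x y : ℕ) :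
    B ^ x * seriesA p y = seriesA p (x + y) := by
  have hpow : ∀ z, B ^ z * seriesA p 0 = seriesA p z :=
    eq_of_shift_recurrence (p + 1) (pow_succ_mul_of_eq_one_add_X_mul_pow hB _) (seriesA_succ p)
      (by rw [pow_zero, one_mul])
  rw [← hpow y, ← hpow (x + y), ← mul_assoc, ← pow_add]

/-- For `p ≥ 2` and the generalized binomial series `B_{p+1}(t)` (the unique formal power
series with `B_{p+1}(t) = 1 + t·B_{p+1}(t)^{p+1}`), one has
`(B_{p+1}(t))^x · 𝒜(p, y; t) = 𝒜(p, x+y; t)` for all integers `x, y ≥ 0`. -/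
theorem seriesA_mul_binomial_pow (p : ℕ) (hp : 2 ≤ p) (B : PowerSeries ℚ)
    (hB : B = 1 + PowerSeries.X * B ^ (p + 1)) (x y : ℕ) :
    B ^ x * seriesA p y = seriesA p (x + y) :=
  seriesA_mul_binomial_pow_general p B hB x y
end
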